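/- Let S ⊂ ℝ^n, 0 ≤ m ≤ n, and let μ be a Radon measure on ℝ^n with supp(μ) = S and a constant c > 0 such that μ(B_E(x,r)) = c·r^m for all x ∈ S and r > 0, where B_E denotes closed Euclidean balls. Equip ℝ^{n+1} with the metric d((x',t),(y',u)) = (|x'-y'|⁴ + (t-u)²)^{1/4} and let ν = μ ⊗ ℒ¹ be the product of μ with one-dimensional Lebesgue measure. Then for every (x,t) ∈ S × ℝ and every r > 0, ν(B_d((x,t),r)) = c'·r^{m+2}, where c' = c·∫_{-1}^{1} (1-τ²)^{m/4} dτ; in particular ν is an (m+2)-uniform measure on (ℝ^{n+1}, d) with support S × ℝ. -/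

import Mathlib

/-!
By Fubini, `ν(B_d((x,t),r))` is the integral over `u` of the `μ`-measure of the slice of the ball
at height `u`. The slice is empty unless `|u - t| ≤ r²`, in which case it is the Euclidean ball
around `x` of radius `(r⁴ - (u - t)²)^{1/4}`, of measure `c (r⁴ - (u - t)²)^{m/4}` (for
`|u - t| < r²`). The substitution `u = t + r² τ` turns the resulting integral into `c' r^{m+2}`.
For the support: a point `(x,t)` with `x ∉ S` has a `μ`-null ball `B_E(x,r)`, and
`B_d((x,t),r) ⊆ B_E(x,r) × ℝ` is then `ν`-null.
-/

open MeasureTheory Set Metric ENNReal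

noncomputable section

/-- `ℝ^{n+1}`, viewed as `ℝⁿ × ℝ`. -/
abbrev Sp (n : ℕ) := EuclideanSpace ℝ (Fin n) × ℝ

/-- The metric `d((x',t),(y',u)) = (|x'-y'|⁴ + (t-u)²)^{1/4}` on `ℝ^{n+1}`. -/
def dK {n : ℕ} (x y : Sp n) : ℝ := (‖x.1 - y.1‖ ^ 4 + (x.2 - y.2) ^ 2) ^ ((1 : ℝ) / 4)

/-- The closed `d`-ball of center `x` and radius `r`. -/
def ballK {n : ℕ} (x : Sp n) (r : ℝ) : Set (Sp n) := {y | dK x y ≤ r}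

/-- The support of a measure on `(ℝ^{n+1}, d)`. -/
def suppK {n : ℕ} (ν : Measure (Sp n)) : Set (Sp n) := {x | ∀ r > 0, 0 < ν (ballK x r)}

lemma Real.rpow_one_div_four_pow {a : ℝ} (ha : 0 ≤ a) (m : ℕ) :
    (a ^ ((1 : ℝ) / 4)) ^ m = a ^ ((m : ℝ) / 4) := by
  rw [← Real.rpow_natCast, ← Real.rpow_mul ha]
  ring_nf

lemma integral_one_sub_sq_rpow_pos {p : ℝ} (hp : 0 ≤ p) :
    0 < ∫ τ in (-1 : ℝ)..1, (1 - τ ^ 2) ^ p := by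
  have hcont : Continuous fun τ : ℝ => (1 - τ ^ 2) ^ p :=
    (Real.continuous_rpow_const hp).comp (by fun_prop)
  refine intervalIntegral.intervalIntegral_pos_of_pos_on (hcont.intervalIntegrable _ _)
    (fun τ hτ => Real.rpow_pos_of_pos ?_ _) (by norm_num)
  nlinarith [hτ.1, hτ.2]

lemma integral_rpow_pow_four_sub_sq (p t : ℝ) {r : ℝ} (hr : 0 < r) :
    ∫ u in (t - r ^ 2)..(t + r ^ 2), (r ^ 4 - (u - t) ^ 2) ^ p =
      r ^ (4 * p + 2) * ∫ τ in (-1 : ℝ)..1, (1 - τ ^ 2) ^ p := by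
  have hsubst := intervalIntegral.integral_comp_mul_add
    (fun u => (r ^ 4 - (u - t) ^ 2) ^ p) (pow_ne_zero 2 hr.ne') t (a := -1) (b := 1)
  have hscale : ∀ τ ∈ uIcc (-1 : ℝ) 1,
      (r ^ 4 - (r ^ 2 * τ + t - t) ^ 2) ^ p = r ^ (4 * p) * (1 - τ ^ 2) ^ p := by
    intro τ hτ
    rw [uIcc_of_le (by norm_num)] at hτ
    rw [show r ^ 4 - (r ^ 2 * τ + t - t) ^ 2 = r ^ 4 * (1 - τ ^ 2) by ring,
      Real.mul_rpow (by positivity) (by nlinarith [hτ.1, hτ.2]),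
      ← Real.rpow_natCast, ← Real.rpow_mul hr.le]
    norm_num
  rw [intervalIntegral.integral_congr hscale, intervalIntegral.integral_const_mul,
    smul_eq_mul, eq_inv_mul_iff_mul_eq₀ (pow_ne_zero 2 hr.ne')] at hsubst
  rw [show r ^ 2 * -1 + t = t - r ^ 2 by ring, show r ^ 2 * 1 + t = t + r ^ 2 by ring] at hsubst
  rw [← hsubst, Real.rpow_add hr, Real.rpow_two]
  ring

section Slices

variable {n : ℕ}

lemma dK_le_iff {z y : Sp n} {r : ℝ} (hr : 0 ≤ r) :
    dK z y ≤ r ↔ ‖z.1 - y.1‖ ^ 4 + (z.2 - y.2) ^ 2 ≤ r ^ 4 := by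
  rw [dK, one_div, Real.rpow_inv_le_iff_of_pos (by positivity) hr four_pos]
  norm_cast

lemma mk_mem_ballK_iff {x y : EuclideanSpace ℝ (Fin n)} {t u r : ℝ} (hr : 0 ≤ r) :
    ((y, u) : Sp n) ∈ ballK ((x, t) : Sp n) r ↔ ‖x - y‖ ^ 4 + (t - u) ^ 2 ≤ r ^ 4 :=
  dK_le_iff hr

lemma continuous_dK (z : Sp n) : Continuous (dK z) :=
  (Real.continuous_rpow_const (by norm_num)).comp
    (((continuous_const.sub continuous_fst).norm.pow 4).add
      ((continuous_const.sub continuous_snd).pow 2))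

lemma measurableSet_ballK (z : Sp n) (r : ℝ) : MeasurableSet (ballK z r) :=
  (continuous_dK z).measurable measurableSet_Iic

lemma ballK_subset_closedBall_prod_univ (x : EuclideanSpace ℝ (Fin n)) (t : ℝ) {r : ℝ}
    (hr : 0 ≤ r) : ballK ((x, t) : Sp n) r ⊆ closedBall x r ×ˢ univ := by
  rintro ⟨y, u⟩ hy
  have hle : ‖x - y‖ ^ 4 + (t - u) ^ 2 ≤ r ^ 4 := (mk_mem_ballK_iff hr).1 hy
  refine ⟨?_, mem_univ u⟩
  rw [mem_closedBall, dist_eq_norm, norm_sub_rev,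
    ← pow_le_pow_iff_left₀ (norm_nonneg _) hr four_ne_zero]
  nlinarith [sq_nonneg (t - u)]

lemma preimage_ballK_eq_closedBall (x : EuclideanSpace ℝ (Fin n)) {t u r : ℝ} (hr : 0 ≤ r)
    (hu : u ∈ Icc (t - r ^ 2) (t + r ^ 2)) :
    (fun y => (y, u)) ⁻¹' ballK ((x, t) : Sp n) r =
      closedBall x ((r ^ 4 - (u - t) ^ 2) ^ ((1 : ℝ) / 4)) := by
  have hrad : 0 ≤ r ^ 4 - (u - t) ^ 2 := by nlinarith [hu.1, hu.2]
  ext y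
  simp only [mem_preimage, mk_mem_ballK_iff hr, mem_closedBall, dist_eq_norm,
    norm_sub_rev y x, one_div, Real.le_rpow_inv_iff_of_pos (norm_nonneg _) hrad four_pos]
  norm_cast
  constructor <;> intro h <;> nlinarith [h]

lemma preimage_ballK_eq_empty (x : EuclideanSpace ℝ (Fin n)) {t u r : ℝ} (hr : 0 ≤ r)
    (hu : u ∉ Icc (t - r ^ 2) (t + r ^ 2)) :
    (fun y => (y, u)) ⁻¹' ballK ((x, t) : Sp n) r = ∅ := by
  have hfar : r ^ 4 < (u - t) ^ 2 := by
    rw [mem_Icc, not_and_or, not_le, not_le] at hu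
    rcases hu with hu | hu <;> nlinarith [sq_nonneg r]
  refine eq_empty_of_forall_notMem fun y hy => ?_
  have hle : ‖x - y‖ ^ 4 + (t - u) ^ 2 ≤ r ^ 4 := (mk_mem_ballK_iff hr).1 hy
  nlinarith [pow_nonneg (norm_nonneg (x - y)) 4]

lemma prod_volume_ballK_eq_zero (μ : Measure (EuclideanSpace ℝ (Fin n)))
    {x : EuclideanSpace ℝ (Fin n)} (t : ℝ) {r : ℝ} (hr : 0 ≤ r)
    (hμ : μ (closedBall x r) = 0) : (μ.prod volume) (ballK ((x, t) : Sp n) r) = 0 :=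
  measure_mono_null (ballK_subset_closedBall_prod_univ x t hr)
    (by rw [Measure.prod_prod, hμ, zero_mul])

variable (μ : Measure (EuclideanSpace ℝ (Fin n))) [SFinite μ]

lemma prod_volume_ballK (x : EuclideanSpace ℝ (Fin n)) (t : ℝ) {r : ℝ} (hr : 0 ≤ r) :
    (μ.prod volume) (ballK ((x, t) : Sp n) r) =
      ∫⁻ u in Icc (t - r ^ 2) (t + r ^ 2),
        μ (closedBall x ((r ^ 4 - (u - t) ^ 2) ^ ((1 : ℝ) / 4))) := by
  rw [Measure.prod_apply_symm (measurableSet_ballK _ _), ← lintegral_indicator measurableSet_Icc]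
  congr 1 with u
  by_cases hu : u ∈ Icc (t - r ^ 2) (t + r ^ 2)
  · rw [indicator_of_mem hu, preimage_ballK_eq_closedBall x hr hu]
  · rw [indicator_of_notMem hu, preimage_ballK_eq_empty x hr hu, measure_empty]

lemma prod_volume_ballK_of_closedBall_eq {m : ℕ} {c : ℝ} (hc : 0 ≤ c)
    {x : EuclideanSpace ℝ (Fin n)}
    (hx : ∀ r : ℝ, 0 < r → μ (closedBall x r) = ENNReal.ofReal (c * r ^ m))
    (t : ℝ) {r : ℝ} (hr : 0 < r) :
    (μ.prod volume) (ballK ((x, t) : Sp n) r) =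
      ENNReal.ofReal ((c * ∫ τ in (-1 : ℝ)..1, (1 - τ ^ 2) ^ ((m : ℝ) / 4)) * r ^ (m + 2)) := by
  set f : ℝ → ℝ := fun u => c * (r ^ 4 - (u - t) ^ 2) ^ ((m : ℝ) / 4)
  have hslices : EqOn (fun u => μ (closedBall x ((r ^ 4 - (u - t) ^ 2) ^ ((1 : ℝ) / 4))))
      (fun u => ENNReal.ofReal (f u)) (Ioo (t - r ^ 2) (t + r ^ 2)) := by
    intro u hu
    have hrad : 0 < r ^ 4 - (u - t) ^ 2 := by nlinarith [hu.1, hu.2]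
    simp only [f, hx _ (Real.rpow_pos_of_pos hrad _), Real.rpow_one_div_four_pow hrad.le]
  have hle : t - r ^ 2 ≤ t + r ^ 2 := by nlinarith [sq_nonneg r]
  have hf_int : IntegrableOn f (Ioc (t - r ^ 2) (t + r ^ 2)) :=
    (Continuous.integrableOn_Icc (continuous_const.mul
      ((Real.continuous_rpow_const (by positivity)).comp (by fun_prop)))).mono_set
      Ioc_subset_Icc_self
  have hf_nonneg : 0 ≤ᵐ[volume.restrict (Ioc (t - r ^ 2) (t + r ^ 2))] f := by
    filter_upwards [ae_restrict_mem measurableSet_Ioc] with u hu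
    have hrad : 0 ≤ r ^ 4 - (u - t) ^ 2 := by nlinarith [hu.1, hu.2]
    positivity
  rw [prod_volume_ballK μ x t hr.le, ← setLIntegral_congr Ioo_ae_eq_Icc,
    setLIntegral_congr_fun measurableSet_Ioo hslices, setLIntegral_congr Ioo_ae_eq_Ioc,
    ← ofReal_integral_eq_lintegral_ofReal hf_int hf_nonneg, ← intervalIntegral.integral_of_le hle,
    intervalIntegral.integral_const_mul, integral_rpow_pow_four_sub_sq _ _ hr,
    show 4 * ((m : ℝ) / 4) + 2 = ((m + 2 : ℕ) : ℝ) by push_cast; ring, Real.rpow_natCast]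
  ring_nf

end Slices

theorem statement14_general (n m : ℕ) (S : Set (EuclideanSpace ℝ (Fin n)))
    (μ : Measure (EuclideanSpace ℝ (Fin n))) [μ.Regular]
    (hsupp : {x | ∀ r > 0, 0 < μ (closedBall x r)} = S)
    (c : ℝ) (hc : 0 < c)
    (hunif : ∀ x ∈ S, ∀ r : ℝ, 0 < r → μ (closedBall x r) = ENNReal.ofReal (c * r ^ m)) :
    (∀ x ∈ S, ∀ t : ℝ, ∀ r : ℝ, 0 < r →
      (μ.prod volume) (ballK ((x, t) : Sp n) r) =
        ENNReal.ofReal ((c * ∫ τ in (-1 : ℝ)..1, (1 - τ ^ 2) ^ ((m : ℝ) / 4)) * r ^ (m + 2))) ∧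
    suppK (μ.prod volume) = S ×ˢ (Set.univ : Set ℝ) := by
  have hball : ∀ x ∈ S, ∀ t r : ℝ, 0 < r → (μ.prod volume) (ballK ((x, t) : Sp n) r) =
      ENNReal.ofReal ((c * ∫ τ in (-1 : ℝ)..1, (1 - τ ^ 2) ^ ((m : ℝ) / 4)) * r ^ (m + 2)) :=
    fun x hx t r hr => prod_volume_ballK_of_closedBall_eq μ hc.le (hunif x hx) t hr
  refine ⟨hball, ?_⟩
  ext ⟨x, t⟩
  simp only [suppK, mem_ofPred_eq, mem_prod, mem_univ, and_true]
  constructor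
  · intro hpos
    rw [← hsupp]
    exact fun r hr => pos_iff_ne_zero.2 fun h0 =>
      (hpos r hr).ne' (prod_volume_ballK_eq_zero μ t hr.le h0)
  · intro hx r hr
    have hI := integral_one_sub_sq_rpow_pos (p := (m : ℝ) / 4) (by positivity)
    rw [hball x hx t r hr]
    exact ENNReal.ofReal_pos.2 (by positivity)

/-- If `μ` is an `m`-uniform Radon measure on `ℝⁿ` (with respect to the Euclidean metric),
with support `S` and `μ(B_E(x,r)) = c rᵐ` for `x ∈ S`, `r > 0`, then `ν = μ ⊗ ℒ¹` satisfies
`ν(B_d((x,t),r)) = c' r^{m+2}` for all `(x,t) ∈ S × ℝ`, `r > 0`, where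
`c' = c ∫_{-1}^{1} (1-τ²)^{m/4} dτ`; in particular `ν` is an `(m+2)`-uniform measure on
`(ℝ^{n+1}, d)` with support `S × ℝ`. -/
theorem statement14 (n m : ℕ) (hm : m ≤ n) (S : Set (EuclideanSpace ℝ (Fin n)))
    (μ : Measure (EuclideanSpace ℝ (Fin n))) [μ.Regular]
    (hsupp : {x | ∀ r > 0, 0 < μ (closedBall x r)} = S)
    (c : ℝ) (hc : 0 < c)
    (hunif : ∀ x ∈ S, ∀ r : ℝ, 0 < r → μ (closedBall x r) = ENNReal.ofReal (c * r ^ m)) :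
    (∀ x ∈ S, ∀ t : ℝ, ∀ r : ℝ, 0 < r →
      (μ.prod volume) (ballK ((x, t) : Sp n) r) =
        ENNReal.ofReal ((c * ∫ τ in (-1 : ℝ)..1, (1 - τ ^ 2) ^ ((m : ℝ) / 4)) * r ^ (m + 2))) ∧
    suppK (μ.prod volume) = S ×ˢ (Set.univ : Set ℝ) :=
  statement14_general n m S μ hsupp c hc hunif
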